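/- Let P be a finite poset and Φ a labeled flag on P. Then there exist a bijection ω : P → {1,…,#P} and a map ρ : P → ℤ_{>0} satisfying condition (LF) such that the set of (P,Φ)-partitions equals the set of (P,ω,ρ)-partitions. -/

import Mathlib

/-- `f : P → ℤ_{>0}` is a `(P,Φ)`-partition for the labeled flag `Φ`: for every cover
`u ⋖ v` one has `f u ≥ f v`, with `f u > f v` whenever `Φ u > Φ v` (lexicographically),
and `f u ≤ val (Φ u)` for all `u`. -/
def IsPhiPart {P : Type*} [PartialOrder P] (Φ : P → ℕ+ ×ₗ ℕ+) (f : P → ℕ+) : Prop :=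
  (∀ u v : P, u ⋖ v → f v ≤ f u ∧ (Φ v < Φ u → f v < f u)) ∧
  ∀ u : P, f u ≤ (ofLex (Φ u)).1

/-- `f : P → ℤ_{>0}` is a `(P,ω,ρ)`-partition: for every cover `u ⋖ v` one has
`f u ≥ f v`, with `f u > f v` whenever `ω u > ω v`, and `f u ≤ ρ u` for all `u`. -/
def IsRestPart {P : Type*} [Fintype P] [PartialOrder P]
    (ω : P ≃ Fin (Fintype.card P)) (ρ : P → ℕ+) (f : P → ℕ+) : Prop :=
  (∀ u v : P, u ⋖ v → f v ≤ f u ∧ (ω v < ω u → f v < f u)) ∧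
  ∀ u : P, f u ≤ ρ u

/-!
Order the elements of `P` by their flag values: since `Φ` is injective this is a total order,
and numbering `P` along it gives a labeling `ω` that compares pairs exactly as `Φ` does. With
`ρ u := val (Φ u)`, condition (LF) holds because the lexicographic order compares first
coordinates first, and the two partition conditions then coincide term by term.
-/

theorem exists_equiv_fin_lt_iff {P α : Type*} [Fintype P] [LinearOrder α] (Φ : P → α)
    (hΦ : Function.Injective Φ) :
    ∃ ω : P ≃ Fin (Fintype.card P), ∀ u v : P, ω u < ω v ↔ Φ u < Φ v := by
  let sortRange : Fin (Fintype.card P) ≃o Set.range Φ :=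
    Fintype.orderIsoFinOfCardEq _ (Set.card_range_of_injective hΦ)
  refine ⟨(Equiv.ofInjective Φ hΦ).trans sortRange.symm.toEquiv, fun u v => ?_⟩
  exact sortRange.symm.lt_iff_lt

theorem isPhiPart_iff_isRestPart {P : Type*} [Fintype P] [PartialOrder P]
    {Φ : P → ℕ+ ×ₗ ℕ+} {ω : P ≃ Fin (Fintype.card P)} (hω : ∀ u v : P, ω u < ω v ↔ Φ u < Φ v)
    (f : P → ℕ+) :
    IsPhiPart Φ f ↔ IsRestPart ω (fun u => (ofLex (Φ u)).1) f := by
  simp only [IsPhiPart, IsRestPart, hω]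

/-- For any labeled flag `Φ` on a finite poset `P` there are a labeling `ω` and a
restriction `ρ` satisfying condition (LF) (`ρ u > ρ v → ω u > ω v`) such that the
`(P,Φ)`-partitions are exactly the `(P,ω,ρ)`-partitions. -/
theorem phiPart_eq_restPart {P : Type*} [Fintype P] [PartialOrder P]
    (Φ : P → ℕ+ ×ₗ ℕ+) (hΦ : Function.Injective Φ) :
    ∃ (ω : P ≃ Fin (Fintype.card P)) (ρ : P → ℕ+),
      (∀ u v : P, ρ v < ρ u → ω v < ω u) ∧
      ∀ f : P → ℕ+, IsPhiPart Φ f ↔ IsRestPart ω ρ f := by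
  obtain ⟨ω, hω⟩ := exists_equiv_fin_lt_iff Φ hΦ
  refine ⟨ω, fun u => (ofLex (Φ u)).1, fun u v hρ => ?_, isPhiPart_iff_isRestPart hω⟩
  exact (hω v u).mpr (Prod.Lex.left _ _ hρ)
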